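/- arXiv:2302.08725 — 6 statements merged into one kernel-verified Lean document; each statement's English description precedes it below -/
import Mathlib

section
/- Let (g,[·,·,·]_g) be a 3-Lie algebra and (V;ρ) a representation of g. A linear map T: V → g is an embedding tensor on g with respect to (V;ρ) if and only if the graph Gr(T) = {Tu + u | u ∈ V} is closed under the bracket [x+u, y+v, z+w]_ρ = [x,y,z]_g + ρ(x,y)w of the hemisemidirect product 3-Leibniz algebra g ⋉_ρ V, i.e., Gr(T) is a 3-Leibniz subalgebra of g ⋉_ρ V. -/
/-- A 3-Lie algebra over `K`: a skew-symmetric trilinear bracket satisfying the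
fundamental identity. -/
structure ThreeLie (K : Type*) [Field K] (g : Type*) [AddCommGroup g] [Module K g] where
  br : g →ₗ[K] g →ₗ[K] g →ₗ[K] g
  skew12 : ∀ x y z, br x y z = - br y x z
  skew23 : ∀ x y z, br x y z = - br x z y
  fund : ∀ x1 x2 x3 x4 x5,
    br x1 x2 (br x3 x4 x5) =
      br (br x1 x2 x3) x4 x5 + br x3 (br x1 x2 x4) x5 + br x3 x4 (br x1 x2 x5)

/-- A representation of a 3-Lie algebra `(g, L.br)` on a vector space `V`. -/
structure ThreeLieRep (K : Type*) [Field K] (g : Type*) [AddCommGroup g] [Module K g]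
    (V : Type*) [AddCommGroup V] [Module K V] (L : ThreeLie K g) where
  ρ : g →ₗ[K] g →ₗ[K] Module.End K V
  skew : ∀ x y, ρ x y = - ρ y x
  rep1 : ∀ x1 x2 x3 x4,
    ρ x1 x2 * ρ x3 x4 = ρ (L.br x1 x2 x3) x4 + ρ x3 (L.br x1 x2 x4) + ρ x3 x4 * ρ x1 x2
  rep2 : ∀ x1 x2 x3 x4,
    ρ x1 (L.br x2 x3 x4) = ρ x3 x4 * ρ x1 x2 - ρ x2 x4 * ρ x1 x3 + ρ x2 x3 * ρ x1 x4

/-- An embedding tensor on the 3-Lie algebra `(g, L.br)` with respect to the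
representation `(V; R.ρ)`. -/
def IsEmbeddingTensor {K : Type*} [Field K] {g : Type*} [AddCommGroup g] [Module K g]
    {V : Type*} [AddCommGroup V] [Module K V] (L : ThreeLie K g) (R : ThreeLieRep K g V L)
    (T : V →ₗ[K] g) : Prop :=
  ∀ u v w : V, L.br (T u) (T v) (T w) = T (R.ρ (T u) (T v) w)

/-- The hemisemidirect product bracket on `g ⊕ V`. -/
def hemiBr {K : Type*} [Field K] {g : Type*} [AddCommGroup g] [Module K g]
    {V : Type*} [AddCommGroup V] [Module K V] (L : ThreeLie K g) (R : ThreeLieRep K g V L)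
    (p q r : g × V) : g × V :=
  (L.br p.1 q.1 r.1, R.ρ p.1 q.1 r.2)

/-- `T` is an embedding tensor iff its graph
`Gr(T) = {(T u, u) | u ∈ V}` is closed under the hemisemidirect product bracket,
i.e. `Gr(T)` is a 3-Leibniz subalgebra of `g ⋉_ρ V`. -/
theorem embeddingTensor_iff_graph_subalgebra
    {K : Type*} [Field K] [CharZero K] {g : Type*} [AddCommGroup g] [Module K g]
    {V : Type*} [AddCommGroup V] [Module K V]
    (L : ThreeLie K g) (R : ThreeLieRep K g V L) (T : V →ₗ[K] g) :
    IsEmbeddingTensor L R T ↔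
      ∀ a b c : g × V, a ∈ {p : g × V | ∃ u : V, p = (T u, u)} →
        b ∈ {p : g × V | ∃ u : V, p = (T u, u)} →
        c ∈ {p : g × V | ∃ u : V, p = (T u, u)} →
        hemiBr L R a b c ∈ {p : g × V | ∃ u : V, p = (T u, u)} := by
  constructor
  · rintro h a b c ⟨u, rfl⟩ ⟨v, rfl⟩ ⟨w, rfl⟩
    exact ⟨R.ρ (T u) (T v) w, by simp [hemiBr, h u v w]⟩
  · intro h u v w
    obtain ⟨s, hs⟩ := h (T u, u) (T v, v) (T w, w) ⟨u, rfl⟩ ⟨v, rfl⟩ ⟨w, rfl⟩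
    simp only [hemiBr, Prod.mk.injEq] at hs
    rw [hs.1, hs.2]
end

section
/- Let T: V → g be an embedding tensor on a 3-Lie algebra (g,[·,·,·]_g) with respect to a representation (V;ρ). Define a trilinear map on V by [u,v,w]_T = ρ(Tu,Tv)w. Then (V,[·,·,·]_T) is a 3-Leibniz algebra, and moreover T satisfies T([u,v,w]_T) = [Tu,Tv,Tw]_g for all u,v,w ∈ V, i.e., T is a homomorphism from the 3-Leibniz algebra (V,[·,·,·]_T) to the 3-Lie algebra (g,[·,·,·]_g). -/
/-- the induced bracket `[u,v,w]_T = ρ(Tu,Tv)w` makes `V` a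
3-Leibniz algebra, and `T` is a homomorphism from `(V, [·,·,·]_T)` to
`(g, [·,·,·]_g)`. -/
theorem embeddingTensor_induced_threeLeibniz_and_hom
    {K : Type*} [Field K] [CharZero K] {g : Type*} [AddCommGroup g] [Module K g]
    {V : Type*} [AddCommGroup V] [Module K V]
    (L : ThreeLie K g) (R : ThreeLieRep K g V L) (T : V →ₗ[K] g)
    (hT : IsEmbeddingTensor L R T) :
    (∀ u1 u2 u3 u4 u5 : V,
        R.ρ (T u1) (T u2) (R.ρ (T u3) (T u4) u5) =
          R.ρ (T (R.ρ (T u1) (T u2) u3)) (T u4) u5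
            + R.ρ (T u3) (T (R.ρ (T u1) (T u2) u4)) u5
            + R.ρ (T u3) (T u4) (R.ρ (T u1) (T u2) u5)) ∧
    (∀ u v w : V, T (R.ρ (T u) (T v) w) = L.br (T u) (T v) (T w)) := by
  constructor
  · intro u1 u2 u3 u4 u5
    have h := R.rep1 (T u1) (T u2) (T u3) (T u4)
    rw [hT u1 u2 u3, hT u1 u2 u4] at h
    have := congrFun (congrArg (fun f : Module.End K V => (f : V → V)) h) u5
    simpa using this
  · intro u v w
    exact (hT u v w).symm
end

section
/- Let T: V → g be an embedding tensor on a 3-Lie algebra (g,[·,·,·]_g) with respect to a representation (V;ρ). Define l_T, m_T, r_T: V×V → End(g) by l_T(u,v)(x) = [Tu,Tv,x]_g, m_T(u,v)(x) = [Tu,x,Tv]_g − T(ρ(Tu,x)v), and r_T = −m_T. Then (g; l_T, m_T, r_T) is a representation of the 3-Leibniz algebra (V,[·,·,·]_T), i.e., for all u1,u2,u3,u4 ∈ V: (1) l_T(u1,u2)l_T(u3,u4) = l_T([u1,u2,u3]_T,u4) + l_T(u3,[u1,u2,u4]_T) + l_T(u3,u4)l_T(u1,u2); (2) l_T(u1,u2)m_T(u3,u4)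 = m_T([u1,u2,u3]_T,u4) + m_T(u3,[u1,u2,u4]_T) + m_T(u3,u4)l_T(u1,u2); (3) l_T(u1,u2)r_T(u3,u4) = r_T([u1,u2,u3]_T,u4) + r_T(u3,[u1,u2,u4]_T) + r_T(u3,u4)l_T(u1,u2); (4) m_T(u1,[u2,u3,u4]_T) = r_T(u3,u4)m_T(u1,u2) + m_T(u2,u4)m_T(u1,u3) + l_T(u2,u3)m_T(u1,u4); (5) r_T(u1,[u2,u3,u4]_T) = r_T(u3,u4)r_T(u1,u2) + m_T(u2,u4)r_T(u1,u3) + l_T(u2,u3)r_T(u1,u4). -/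
variable {K : Type*} [Field K] {g : Type*} [AddCommGroup g] [Module K g]
  {V : Type*} [AddCommGroup V] [Module K V]

/-- `l_T(u,v)(x) = [Tu, Tv, x]_g`. -/
def lT (L : ThreeLie K g) (R : ThreeLieRep K g V L) (T : V →ₗ[K] g)
    (u v : V) (x : g) : g :=
  L.br (T u) (T v) x

/-- `m_T(u,v)(x) = [Tu, x, Tv]_g − T(ρ(Tu, x)v)`. -/
def mT (L : ThreeLie K g) (R : ThreeLieRep K g V L) (T : V →ₗ[K] g)
    (u v : V) (x : g) : g :=
  L.br (T u) x (T v) - T (R.ρ (T u) x v)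

/-- `r_T = − m_T`. -/
def rT (L : ThreeLie K g) (R : ThreeLieRep K g V L) (T : V →ₗ[K] g)
    (u v : V) (x : g) : g :=
  - mT L R T u v x

/-- The induced 3-Leibniz bracket `[u,v,w]_T = ρ(Tu,Tv)w` on `V`. -/
def brT (L : ThreeLie K g) (R : ThreeLieRep K g V L) (T : V →ₗ[K] g)
    (u v w : V) : V :=
  R.ρ (T u) (T v) w

lemma rep1' (L : ThreeLie K g) (R : ThreeLieRep K g V L) (x1 x2 x3 x4 : g) (v : V) :
    R.ρ x1 x2 (R.ρ x3 x4 v) =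
      R.ρ (L.br x1 x2 x3) x4 v + R.ρ x3 (L.br x1 x2 x4) v + R.ρ x3 x4 (R.ρ x1 x2 v) := by
  have h := LinearMap.congr_fun (R.rep1 x1 x2 x3 x4) v
  simpa [Module.End.mul_apply] using h

lemma rskew' (L : ThreeLie K g) (R : ThreeLieRep K g V L) (x y : g) (v : V) :
    R.ρ x y v = - R.ρ y x v := by
  rw [R.skew x y]; simp

/-- `(g; l_T, m_T, r_T)` is a representation of the 3-Leibniz
algebra `(V, [·,·,·]_T)`. -/
theorem embeddingTensor_lmr_is_rep [CharZero K]
    (L : ThreeLie K g) (R : ThreeLieRep K g V L) (T : V →ₗ[K] g)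
    (hT : IsEmbeddingTensor L R T) :
    (∀ (u1 u2 u3 u4 : V) (x : g),
      lT L R T u1 u2 (lT L R T u3 u4 x) =
        lT L R T (brT L R T u1 u2 u3) u4 x + lT L R T u3 (brT L R T u1 u2 u4) x
          + lT L R T u3 u4 (lT L R T u1 u2 x)) ∧
    (∀ (u1 u2 u3 u4 : V) (x : g),
      lT L R T u1 u2 (mT L R T u3 u4 x) =
        mT L R T (brT L R T u1 u2 u3) u4 x + mT L R T u3 (brT L R T u1 u2 u4) x
          + mT L R T u3 u4 (lT L R T u1 u2 x)) ∧
    (∀ (u1 u2 u3 u4 : V) (x : g),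
      lT L R T u1 u2 (rT L R T u3 u4 x) =
        rT L R T (brT L R T u1 u2 u3) u4 x + rT L R T u3 (brT L R T u1 u2 u4) x
          + rT L R T u3 u4 (lT L R T u1 u2 x)) ∧
    (∀ (u1 u2 u3 u4 : V) (x : g),
      mT L R T u1 (brT L R T u2 u3 u4) x =
        rT L R T u3 u4 (mT L R T u1 u2 x) + mT L R T u2 u4 (mT L R T u1 u3 x)
          + lT L R T u2 u3 (mT L R T u1 u4 x)) ∧
    (∀ (u1 u2 u3 u4 : V) (x : g),
      rT L R T u1 (brT L R T u2 u3 u4) x =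
        rT L R T u3 u4 (rT L R T u1 u2 x) + mT L R T u2 u4 (rT L R T u1 u3 x)
          + lT L R T u2 u3 (rT L R T u1 u4 x)) := by
  have h2 : ∀ (u1 u2 u3 u4 : V) (x : g),
      lT L R T u1 u2 (mT L R T u3 u4 x) =
        mT L R T (brT L R T u1 u2 u3) u4 x + mT L R T u3 (brT L R T u1 u2 u4) x
          + mT L R T u3 u4 (lT L R T u1 u2 x) := by
    intro u1 u2 u3 u4 x
    simp only [lT, mT, brT]
    rw [← hT u1 u2 u3, ← hT u1 u2 u4, map_sub, hT u1 u2 (R.ρ (T u3) x u4),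
      L.fund (T u1) (T u2) (T u3) x (T u4),
      rep1' L R (T u1) (T u2) (T u3) x u4, map_add, map_add]
    abel
  have h4 : ∀ (u1 u2 u3 u4 : V) (x : g),
      mT L R T u1 (brT L R T u2 u3 u4) x =
        rT L R T u3 u4 (mT L R T u1 u2 x) + mT L R T u2 u4 (mT L R T u1 u3 x)
          + lT L R T u2 u3 (mT L R T u1 u4 x) := by
    intro u1 u2 u3 u4 x
    simp only [lT, mT, rT, brT]
    rw [← hT u2 u3 u4]
    simp only [map_sub, LinearMap.sub_apply]
    rw [L.fund (T u1) x (T u2) (T u3) (T u4),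
      hT u2 u3 (R.ρ (T u1) x u4),
      ← hT u3 (R.ρ (T u1) x u2) u4,
      ← hT u2 (R.ρ (T u1) x u3) u4,
      rep1' L R (T u1) x (T u2) (T u3) u4, map_add, map_add,
      L.skew12 (L.br (T u1) x (T u2)) (T u3) (T u4),
      rskew' L R (L.br (T u1) x (T u2)) (T u3) u4, map_neg]
    abel
  refine ⟨?_, h2, ?_, h4, ?_⟩
  · intro u1 u2 u3 u4 x
    simp only [lT, brT]
    rw [← hT u1 u2 u3, ← hT u1 u2 u4]
    exact L.fund _ _ _ _ _
  · intro u1 u2 u3 u4 x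
    have hneg : lT L R T u1 u2 (-(mT L R T u3 u4 x)) =
        -(lT L R T u1 u2 (mT L R T u3 u4 x)) := by
      simp [lT]
    simp only [rT, hneg, h2 u1 u2 u3 u4 x]
    abel
  · intro u1 u2 u3 u4 x
    have hmneg : ∀ (a b : V) (y : g), mT L R T a b (-y) = -(mT L R T a b y) := by
      intro a b y; simp [mT]; abel
    have hlneg : ∀ (a b : V) (y : g), lT L R T a b (-y) = -(lT L R T a b y) := by
      intro a b y; simp [lT]
    simp only [rT, hmneg, hlneg, h4 u1 u2 u3 u4 x]
    abel
end

section
/- Let T: V → g be an embedding tensor on a 3-Lie algebra (g,[·,·,·]_g) with respect to a representation (V;ρ). For x,y ∈ g, define the linear map δ(x,y): V → g by δ(x,y)v = T(ρ(x,y)v) − [x,y,Tv]_g. Then δ(x,y) is a 1-cocycle of the 3-Leibniz algebra (V,[·,·,·]_T) with coefficients in (g; l_T, m_T, r_T); explicitly, for all u,v,w ∈ V: −δ(x,y)([u,v,w]_T) + [Tu,Tv,δ(x,y)w]_g + [δ(x,y)u,Tv,Tw]_g − T(ρ(δ(x,y)u,Tv)w) + [Tu,δ(x,y)v,Tw]_g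 − T(ρ(Tu,δ(x,y)v)w) = 0. -/
/-- for an embedding tensor `T` and `x, y ∈ g`, the map
`δ(x,y) : V → g`, `δ(x,y)v = T(ρ(x,y)v) − [x,y,Tv]_g`, is a 1-cocycle of the
3-Leibniz algebra `(V,[·,·,·]_T)` with coefficients in `(g; l_T, m_T, r_T)`. -/
theorem delta_is_one_cocycle
    {K : Type*} [Field K] [CharZero K] {g : Type*} [AddCommGroup g] [Module K g]
    {V : Type*} [AddCommGroup V] [Module K V]
    (L : ThreeLie K g) (R : ThreeLieRep K g V L) (T : V →ₗ[K] g)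
    (hT : IsEmbeddingTensor L R T) (x y : g) :
    ∀ u v w : V,
      - (T (R.ρ x y (R.ρ (T u) (T v) w)) - L.br x y (T (R.ρ (T u) (T v) w)))
        + L.br (T u) (T v) (T (R.ρ x y w) - L.br x y (T w))
        + L.br (T (R.ρ x y u) - L.br x y (T u)) (T v) (T w)
        - T (R.ρ (T (R.ρ x y u) - L.br x y (T u)) (T v) w)
        + L.br (T u) (T (R.ρ x y v) - L.br x y (T v)) (T w)
        - T (R.ρ (T u) (T (R.ρ x y v) - L.br x y (T v)) w) = 0 := by
  intro u v w
  have hfund : L.br x y (T (R.ρ (T u) (T v) w)) =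
      L.br (L.br x y (T u)) (T v) (T w) + L.br (T u) (L.br x y (T v)) (T w)
        + L.br (T u) (T v) (L.br x y (T w)) := by
    rw [← hT u v w]; exact L.fund x y (T u) (T v) (T w)
  have h2 : L.br (T u) (T v) (T (R.ρ x y w)) = T (R.ρ (T u) (T v) (R.ρ x y w)) := hT u v _
  have h3 : L.br (T (R.ρ x y u)) (T v) (T w) = T (R.ρ (T (R.ρ x y u)) (T v) w) := hT _ v w
  have h4 : L.br (T u) (T (R.ρ x y v)) (T w) = T (R.ρ (T u) (T (R.ρ x y v)) w) := hT u _ w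
  have hrep : R.ρ x y (R.ρ (T u) (T v) w) =
      R.ρ (L.br x y (T u)) (T v) w + R.ρ (T u) (L.br x y (T v)) w
        + R.ρ (T u) (T v) (R.ρ x y w) := by
    have := congrFun (congrArg DFunLike.coe (R.rep1 x y (T u) (T v))) w
    simpa [Module.End.mul_apply] using this
  simp only [map_sub, map_add, LinearMap.sub_apply, LinearMap.add_apply]
  rw [hfund, h2, h3, h4, hrep]
  simp only [map_add]
  abel
end

section
/- Let T be an embedding tensor on a 3-Lie algebra (g,[·,·,·]_g) with respect to a representation (V;ρ), and let T_t = Σ_{i≥0} τ_i t^i and T̃_t = Σ_{i≥0} τ̃_i t^i be two formal deformations of T (so τ_0 = τ̃_0 = T, and for every s ≥ 0: Σ_{i+j+k=s}([τ_i u,τ_j v,τ_k w]_g − τ_k(ρ(τ_i u,τ_j v)w)) = 0, and likewise for the τ̃_i). Suppose T_t and T̃_t are equivalent: there exist x,y ∈ g and linear maps φ_i ∈ End(g), ψ_i ∈ End(V) for i ≥ 2 such that, setting φ_0 = Id_g, φ_1 = [x,y,·]_g, ψ_0 = Id_V, ψ_1 = ρ(x,y), the formal power series φ_t = Σ φ_i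 t^i and ψ_t = Σ ψ_i t^i satisfy, coefficientwise in t: φ_t([a,b,c]_g) = [φ_t(a),φ_t(b),φ_t(c)]_g, ρ(φ_t(a),φ_t(b))ψ_t(u) = ψ_t(ρ(a,b)u), and T_t ∘ ψ_t = φ_t ∘ T̃_t. Then the infinitesimals differ by a coboundary: τ̃_1(u) = τ_1(u) + T(ρ(x,y)u) − [x,y,Tu]_g for all u ∈ V; in particular τ_1 and τ̃_1 lie in the same second cohomology class of T. -/
/-- The set of triples `(i,j,k)` of naturals with `i + j + k = s`. -/
def triples (s : ℕ) : Finset (ℕ × ℕ × ℕ) :=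
  (Finset.range (s + 1) ×ˢ Finset.range (s + 1) ×ˢ Finset.range (s + 1)).filter
    (fun p => p.1 + p.2.1 + p.2.2 = s)

/-- if two formal deformations `T_t = Σ τ_i t^i` and
`T̃_t = Σ τ̃_i t^i` of an embedding tensor `T` are equivalent (via `x, y ∈ g` and
higher maps `φ_i, ψ_i`), then their infinitesimals differ by the coboundary
`δ(x,y)`: `τ̃_1 u = τ_1 u + T(ρ(x,y)u) − [x,y,Tu]_g`; in particular `τ_1` and
`τ̃_1` are in the same second cohomology class. -/
theorem equivalent_deformations_same_class
    {K : Type*} [Field K] [CharZero K] {g : Type*} [AddCommGroup g] [Module K g]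
    {V : Type*} [AddCommGroup V] [Module K V]
    (L : ThreeLie K g) (R : ThreeLieRep K g V L) (T : V →ₗ[K] g)
    (hT : IsEmbeddingTensor L R T)
    (τ τ' : ℕ → (V →ₗ[K] g)) (hτ0 : τ 0 = T) (hτ'0 : τ' 0 = T)
    (hdef : ∀ (s : ℕ) (u v w : V),
      ∑ p ∈ triples s,
        (L.br ((τ p.1) u) ((τ p.2.1) v) ((τ p.2.2) w)
          - (τ p.2.2) (R.ρ ((τ p.1) u) ((τ p.2.1) v) w)) = 0)
    (hdef' : ∀ (s : ℕ) (u v w : V),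
      ∑ p ∈ triples s,
        (L.br ((τ' p.1) u) ((τ' p.2.1) v) ((τ' p.2.2) w)
          - (τ' p.2.2) (R.ρ ((τ' p.1) u) ((τ' p.2.1) v) w)) = 0)
    -- equivalence data
    (x y : g) (φ : ℕ → (g →ₗ[K] g)) (ψ : ℕ → (V →ₗ[K] V))
    (hφ0 : φ 0 = LinearMap.id) (hφ1 : φ 1 = L.br x y)
    (hψ0 : ψ 0 = LinearMap.id) (hψ1 : ψ 1 = R.ρ x y)
    -- `φ_t` is a 3-Lie algebra homomorphism, coefficientwise in `t`
    (heq1 : ∀ (s : ℕ) (a b c : g),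
      (φ s) (L.br a b c) =
        ∑ p ∈ triples s, L.br ((φ p.1) a) ((φ p.2.1) b) ((φ p.2.2) c))
    -- `ρ(φ_t a, φ_t b) ψ_t u = ψ_t (ρ(a,b) u)`, coefficientwise in `t`
    (heq2 : ∀ (s : ℕ) (a b : g) (u : V),
      ∑ p ∈ triples s, R.ρ ((φ p.1) a) ((φ p.2.1) b) ((ψ p.2.2) u)
        = (ψ s) (R.ρ a b u))
    -- `T_t ∘ ψ_t = φ_t ∘ T̃_t`, coefficientwise in `t`
    (heq3 : ∀ (s : ℕ) (u : V),
      ∑ p ∈ Finset.HasAntidiagonal.antidiagonal s, (τ p.1) ((ψ p.2) u)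
        = ∑ p ∈ Finset.HasAntidiagonal.antidiagonal s, (φ p.1) ((τ' p.2) u)) :
    ∀ u : V, (τ' 1) u = (τ 1) u + T (R.ρ x y u) - L.br x y (T u) := by
  intro u
  have h := heq3 1 u
  have had : Finset.HasAntidiagonal.antidiagonal 1 = {(0,1),(1,0)} := by decide
  rw [had] at h
  simp [hτ0, hτ'0, hφ0, hφ1, hψ0, hψ1, Finset.sum_insert, Finset.sum_singleton] at h
  linear_combination (norm := abel) h.symm
end

section
/- Let T: V → g be an embedding tensor on a 3-Lie algebra (g,[·,·,·]_g) with respect to a representation (V;ρ). Suppose the third cohomology group of T vanishes, i.e., every 2-cochain θ: V⊗V⊗V → g with ∂_T θ = 0 is of the form θ = ∂_T η for some linear map η: V → g (with the coboundaries ∂_T as defined below). Then every 2-cocycle is the infinitesimal of a formal deformation of T: for every linear map τ_1: V → g satisfying [Tu,Tv,τ_1w]_g + [τ_1u,Tv,Tw]_g + [Tu,τ_1v,Tw]_g = τ_1(ρ(Tu,Tv)w) + T(ρ(τ_1u,Tv)w) + T(ρ(Tu,τ_1v)w) for all u,v,w ∈ V, there exist linear maps τ_i: V → g for i ≥ 2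 such that, with τ_0 = T, for every s ≥ 0 and all u,v,w ∈ V: Σ_{i+j+k=s} ([τ_i u,τ_j v,τ_k w]_g − τ_k(ρ(τ_i u,τ_j v)w)) = 0. -/
variable {K : Type*} [Field K] {g : Type*} [AddCommGroup g] [Module K g]
  {V : Type*} [AddCommGroup V] [Module K V]

section AuxDefs

variable {K : Type*} [Field K] {g : Type*} [AddCommGroup g] [Module K g]
  {V : Type*} [AddCommGroup V] [Module K V]

/-- triples with all entries `< s`. -/
def tri (s : ℕ) : Finset (ℕ × ℕ × ℕ) :=
  (Finset.range s ×ˢ Finset.range s ×ˢ Finset.range s).filter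
    (fun p => p.1 + p.2.1 + p.2.2 = s)

/-- bundled defect trilinear map. -/
def Dlin (L : ThreeLie K g) (R : ThreeLieRep K g V L) (a b c : V →ₗ[K] g) :
    V →ₗ[K] V →ₗ[K] V →ₗ[K] g where
  toFun u :=
  { toFun := fun v =>
    { toFun := fun w => L.br (a u) (b v) (c w) - c (R.ρ (a u) (b v) w)
      map_add' := by intro x y; simp only [map_add, LinearMap.add_apply]; abel
      map_smul' := by intro t x; simp only [map_smul, LinearMap.smul_apply,
        RingHom.id_apply, smul_sub] }
    map_add' := by
      intro x y; ext w
      simp only [LinearMap.coe_mk, AddHom.coe_mk, map_add, LinearMap.add_apply]; abel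
    map_smul' := by
      intro t x; ext w
      simp only [LinearMap.coe_mk, AddHom.coe_mk, map_smul, LinearMap.smul_apply,
        RingHom.id_apply, smul_sub] }
  map_add' := by
    intro x y; ext v w
    simp only [LinearMap.coe_mk, AddHom.coe_mk, map_add, LinearMap.add_apply]; abel
  map_smul' := by
    intro t x; ext v w
    simp only [LinearMap.coe_mk, AddHom.coe_mk, map_smul, LinearMap.smul_apply,
      RingHom.id_apply, smul_sub]

@[simp] lemma Dlin_apply (L : ThreeLie K g) (R : ThreeLieRep K g V L) (a b c : V →ₗ[K] g)
    (u v w : V) :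
    Dlin L R a b c u v w = L.br (a u) (b v) (c w) - c (R.ρ (a u) (b v) w) := rfl

/-- the coboundary-shaped quintic form. -/
def Psi (L : ThreeLie K g) (R : ThreeLieRep K g V L) (a b : V →ₗ[K] g)
    (θ : V →ₗ[K] V →ₗ[K] V →ₗ[K] g) (u1 v1 u2 v2 w : V) : g :=
  - θ (R.ρ (a u1) (b v1) u2) v2 w - θ u2 (R.ρ (a u1) (b v1) v2) w
  - θ u2 v2 (R.ρ (a u1) (b v1) w) + θ u1 v1 (R.ρ (a u2) (b v2) w)
  + L.br (a u1) (b v1) (θ u2 v2 w) - L.br (a u2) (b v2) (θ u1 v1 w)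
  - (L.br (a u2) (θ u1 v1 v2) (b w) - a (R.ρ (b u2) (θ u1 v1 v2) w))
  + (L.br (a v2) (θ u1 v1 u2) (b w) - a (R.ρ (b v2) (θ u1 v1 u2) w))

/-- Bianchi identity: the coboundary form applied to the defect of an arbitrary
linear map vanishes identically. -/
lemma lemA (L : ThreeLie K g) (R : ThreeLieRep K g V L) (S : V →ₗ[K] g)
    (u1 v1 u2 v2 w : V) :
    Psi L R S S (Dlin L R S S S) u1 v1 u2 v2 w = 0 := by
  have hf := L.fund (S u1) (S v1) (S u2) (S v2) (S w)
  have hr := LinearMap.congr_fun (R.rep1 (S u1) (S v1) (S u2) (S v2)) w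
  simp only [Module.End.mul_apply, LinearMap.add_apply] at hr
  have hrS := congrArg S hr
  simp only [map_add] at hrS
  have sA : S (R.ρ (S (R.ρ (S u1) (S v1) u2)) (S v2) w)
      = - S (R.ρ (S v2) (S (R.ρ (S u1) (S v1) u2)) w) := by
    rw [R.skew]; simp
  have sB : L.br (S (R.ρ (S u1) (S v1) u2)) (S v2) (S w)
      = - L.br (S v2) (S (R.ρ (S u1) (S v1) u2)) (S w) := L.skew12 _ _ _
  have sC : L.br (L.br (S u1) (S v1) (S u2)) (S v2) (S w)
      = - L.br (S v2) (L.br (S u1) (S v1) (S u2)) (S w) := L.skew12 _ _ _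
  have sD : S (R.ρ (L.br (S u1) (S v1) (S u2)) (S v2) w)
      = - S (R.ρ (S v2) (L.br (S u1) (S v1) (S u2)) w) := by
    rw [R.skew]; simp
  simp only [Psi, Dlin_apply, map_sub, LinearMap.sub_apply, map_add, LinearMap.add_apply]
  linear_combination (norm := module) hf - hrS + sA - sB + sC - sD

end AuxDefs
section AuxLemmas

variable {K : Type*} [Field K] {g : Type*} [AddCommGroup g] [Module K g]
  {V : Type*} [AddCommGroup V] [Module K V]

lemma map_fsum {ι M N : Type*} [AddCommMonoid M] [AddCommMonoid N] (Φ : M → N)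
    (hadd : ∀ x y, Φ (x + y) = Φ x + Φ y) (h0 : Φ 0 = 0) (F : Finset ι) (f : ι → M) :
    Φ (∑ i ∈ F, f i) = ∑ i ∈ F, Φ (f i) := by
  classical
  induction F using Finset.cons_induction with
  | empty => simpa using h0
  | cons a F ha ih => rw [Finset.sum_cons, hadd, ih, Finset.sum_cons]

lemma map_fsum_smul {ι M N : Type*} [AddCommMonoid M] [AddCommMonoid N]
    [Monoid K'] [DistribMulAction K' M] [DistribMulAction K' N] (Φ : M → N)
    (hadd : ∀ x y, Φ (x + y) = Φ x + Φ y) (h0 : Φ 0 = 0)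
    (hsmul : ∀ (c : K') (x : M), Φ (c • x) = c • Φ x)
    (F : Finset ι) (e : ι → K') (f : ι → M) :
    Φ (∑ i ∈ F, e i • f i) = ∑ i ∈ F, e i • Φ (f i) := by
  rw [map_fsum Φ hadd h0]
  exact Finset.sum_congr rfl fun i _ => hsmul _ _

variable (L : ThreeLie K g) (R : ThreeLieRep K g V L)

-- Dlin slot linearity (pointwise)
lemma Dlin_sum1 {ι : Type*} (F : Finset ι) (e : ι → K) (f : ι → (V →ₗ[K] g))
    (b c : V →ₗ[K] g) (u v w : V) :
    Dlin L R (∑ i ∈ F, e i • f i) b c u v w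
      = ∑ i ∈ F, e i • Dlin L R (f i) b c u v w := by
  exact map_fsum_smul (K' := K) (fun x => Dlin L R x b c u v w)
    (by intro x y; simp only [Dlin_apply, LinearMap.add_apply, map_add,
          LinearMap.add_apply]; abel)
    (by simp)
    (by intro t x; simp only [Dlin_apply, LinearMap.smul_apply, map_smul,
          LinearMap.smul_apply, smul_sub])
    F e f

lemma Dlin_sum2 {ι : Type*} (F : Finset ι) (e : ι → K) (f : ι → (V →ₗ[K] g))
    (a c : V →ₗ[K] g) (u v w : V) :
    Dlin L R a (∑ i ∈ F, e i • f i) c u v w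
      = ∑ i ∈ F, e i • Dlin L R a (f i) c u v w := by
  exact map_fsum_smul (K' := K) (fun x => Dlin L R a x c u v w)
    (by intro x y; simp only [Dlin_apply, LinearMap.add_apply, map_add,
          LinearMap.add_apply]; abel)
    (by simp)
    (by intro t x; simp only [Dlin_apply, LinearMap.smul_apply, map_smul,
          LinearMap.smul_apply, smul_sub])
    F e f

lemma Dlin_sum3 {ι : Type*} (F : Finset ι) (e : ι → K) (f : ι → (V →ₗ[K] g))
    (a b : V →ₗ[K] g) (u v w : V) :
    Dlin L R a b (∑ i ∈ F, e i • f i) u v w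
      = ∑ i ∈ F, e i • Dlin L R a b (f i) u v w := by
  exact map_fsum_smul (K' := K) (fun x => Dlin L R a b x u v w)
    (by intro x y; simp only [Dlin_apply, LinearMap.add_apply, map_add,
          LinearMap.add_apply]; abel)
    (by simp)
    (by intro t x; simp only [Dlin_apply, LinearMap.smul_apply, map_smul,
          LinearMap.smul_apply, smul_sub])
    F e f

-- Psi slot lemmas
lemma Psi_addθ (a b : V →ₗ[K] g) (θ1 θ2 : V →ₗ[K] V →ₗ[K] V →ₗ[K] g) (u1 v1 u2 v2 w : V) :
    Psi L R a b (θ1 + θ2) u1 v1 u2 v2 w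
      = Psi L R a b θ1 u1 v1 u2 v2 w + Psi L R a b θ2 u1 v1 u2 v2 w := by
  simp only [Psi, LinearMap.add_apply, map_add]; abel

lemma Psi_smulθ (c : K) (a b : V →ₗ[K] g) (θ : V →ₗ[K] V →ₗ[K] V →ₗ[K] g)
    (u1 v1 u2 v2 w : V) :
    Psi L R a b (c • θ) u1 v1 u2 v2 w = c • Psi L R a b θ u1 v1 u2 v2 w := by
  simp only [Psi, LinearMap.smul_apply, map_smul, smul_sub, smul_add, smul_neg]

lemma Psi_zeroθ (a b : V →ₗ[K] g) (u1 v1 u2 v2 w : V) :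
    Psi L R a b 0 u1 v1 u2 v2 w = 0 := by
  simp [Psi]

lemma Psi_sumθ {ι : Type*} (F : Finset ι) (e : ι → K)
    (θ : ι → (V →ₗ[K] V →ₗ[K] V →ₗ[K] g)) (a b : V →ₗ[K] g) (u1 v1 u2 v2 w : V) :
    Psi L R a b (∑ i ∈ F, e i • θ i) u1 v1 u2 v2 w
      = ∑ i ∈ F, e i • Psi L R a b (θ i) u1 v1 u2 v2 w :=
  map_fsum_smul (K' := K) (fun x => Psi L R a b x u1 v1 u2 v2 w)
    (fun x y => Psi_addθ L R a b x y u1 v1 u2 v2 w)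
    (Psi_zeroθ L R a b u1 v1 u2 v2 w)
    (fun c x => Psi_smulθ L R c a b x u1 v1 u2 v2 w) F e θ

lemma Psi_suma {ι : Type*} (F : Finset ι) (e : ι → K) (f : ι → (V →ₗ[K] g))
    (b : V →ₗ[K] g) (θ : V →ₗ[K] V →ₗ[K] V →ₗ[K] g) (u1 v1 u2 v2 w : V) :
    Psi L R (∑ i ∈ F, e i • f i) b θ u1 v1 u2 v2 w
      = ∑ i ∈ F, e i • Psi L R (f i) b θ u1 v1 u2 v2 w := by
  exact map_fsum_smul (K' := K) (fun x => Psi L R x b θ u1 v1 u2 v2 w)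
    (by intro x y; simp only [Psi, LinearMap.add_apply, map_add,
          LinearMap.add_apply]; abel)
    (by simp [Psi])
    (by intro c x; simp only [Psi, LinearMap.smul_apply, map_smul,
          LinearMap.smul_apply, smul_sub, smul_add, smul_neg])
    F e f

lemma Psi_sumb {ι : Type*} (F : Finset ι) (e : ι → K) (f : ι → (V →ₗ[K] g))
    (a : V →ₗ[K] g) (θ : V →ₗ[K] V →ₗ[K] V →ₗ[K] g) (u1 v1 u2 v2 w : V) :
    Psi L R a (∑ i ∈ F, e i • f i) θ u1 v1 u2 v2 w
      = ∑ i ∈ F, e i • Psi L R a (f i) θ u1 v1 u2 v2 w := by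
  exact map_fsum_smul (K' := K) (fun x => Psi L R a x θ u1 v1 u2 v2 w)
    (by intro x y; simp only [Psi, LinearMap.add_apply, map_add,
          LinearMap.add_apply]; abel)
    (by simp [Psi])
    (by intro c x; simp only [Psi, LinearMap.smul_apply, map_smul,
          LinearMap.smul_apply, smul_sub, smul_add, smul_neg])
    F e f

lemma Psi_sumθ0 {ι : Type*} (F : Finset ι)
    (θ : ι → (V →ₗ[K] V →ₗ[K] V →ₗ[K] g)) (a b : V →ₗ[K] g) (u1 v1 u2 v2 w : V) :
    Psi L R a b (∑ i ∈ F, θ i) u1 v1 u2 v2 w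
      = ∑ i ∈ F, Psi L R a b (θ i) u1 v1 u2 v2 w :=
  map_fsum (fun x => Psi L R a b x u1 v1 u2 v2 w)
    (fun x y => Psi_addθ L R a b x y u1 v1 u2 v2 w)
    (Psi_zeroθ L R a b u1 v1 u2 v2 w) F θ

end AuxLemmas
section AuxLemmas2

variable {K : Type*} [Field K] {g : Type*} [AddCommGroup g] [Module K g]
  {V : Type*} [AddCommGroup V] [Module K V]

lemma poly_vanish [CharZero K] {D : ℕ} (A : ℕ → g)
    (h : ∀ t : K, ∑ d ∈ Finset.range D, t ^ d • A d = 0) :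
    ∀ d, d < D → A d = 0 := by
  intro d hd
  rw [← Module.forall_dual_apply_eq_zero_iff K]
  intro φ
  set p : Polynomial K :=
    ∑ e ∈ Finset.range D, Polynomial.C (φ (A e)) * Polynomial.X ^ e with hp
  have hev : ∀ t : K, p.eval t = 0 := by
    intro t
    have h2 := congrArg φ (h t)
    simp only [map_sum, map_smul, map_zero, smul_eq_mul] at h2
    rw [hp]
    simp only [Polynomial.eval_finset_sum, Polynomial.eval_mul, Polynomial.eval_C,
      Polynomial.eval_pow, Polynomial.eval_X]
    rw [← h2]
    exact Finset.sum_congr rfl fun e _ => mul_comm _ _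
  have hp0 : p = 0 := Polynomial.funext (by simp [hev])
  have hc : φ (A d) = p.coeff d := by
    rw [hp, Polynomial.finset_sum_coeff]
    simp only [Polynomial.coeff_C_mul, Polynomial.coeff_X_pow, mul_ite, mul_one, mul_zero]
    simp [Finset.sum_ite_eq, hd]
  rw [hc, hp0, Polynomial.coeff_zero]

lemma mem_tri {s : ℕ} {r : ℕ × ℕ × ℕ} :
    r ∈ tri s ↔ r.1 < s ∧ r.2.1 < s ∧ r.2.2 < s ∧ r.1 + r.2.1 + r.2.2 = s := by
  obtain ⟨i, j, k⟩ := r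
  simp [tri, Finset.mem_filter, Finset.mem_product, Finset.mem_range, and_assoc]

lemma mem_triples {s : ℕ} {r : ℕ × ℕ × ℕ} :
    r ∈ triples s ↔ r.1 + r.2.1 + r.2.2 = s := by
  obtain ⟨i, j, k⟩ := r
  simp only [triples, Finset.mem_filter, Finset.mem_product, Finset.mem_range]
  omega

lemma filter_eq_triples {s m : ℕ} (h : m < s) :
    (Finset.range s ×ˢ Finset.range s ×ˢ Finset.range s).filter
      (fun r => r.1 + r.2.1 + r.2.2 = m) = triples m := by
  ext ⟨i, j, k⟩
  simp only [Finset.mem_filter, Finset.mem_product, Finset.mem_range, triples]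
  omega

lemma triples_eq_insert {s : ℕ} (hs : 2 ≤ s) :
    triples s = insert (s, 0, 0) (insert (0, s, 0) (insert ((0:ℕ), (0:ℕ), s) (tri s))) := by
  ext ⟨i, j, k⟩
  simp only [Finset.mem_insert, mem_triples, mem_tri, Prod.mk.injEq]
  omega

lemma sum_triples_split {M : Type*} [AddCommMonoid M] {s : ℕ} (hs : 2 ≤ s)
    (f : ℕ × ℕ × ℕ → M) :
    ∑ p ∈ triples s, f p
      = f (s, 0, 0) + f (0, s, 0) + f (0, 0, s) + ∑ p ∈ tri s, f p := by
  rw [triples_eq_insert hs, Finset.sum_insert, Finset.sum_insert, Finset.sum_insert]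
  · abel
  · simp only [mem_tri]; omega
  · simp only [Finset.mem_insert, mem_tri, Prod.mk.injEq]; omega
  · simp only [Finset.mem_insert, mem_tri, Prod.mk.injEq]; omega

end AuxLemmas2
section Obstruction

variable {K : Type*} [Field K] {g : Type*} [AddCommGroup g] [Module K g]
  {V : Type*} [AddCommGroup V] [Module K V]

lemma obstruction [CharZero K] (L : ThreeLie K g) (R : ThreeLieRep K g V L)
    (f : ℕ → V →ₗ[K] g) (s : ℕ) (hs : 2 ≤ s)
    (hlow : ∀ m, m < s → ∀ u v w : V,
      ∑ p ∈ triples m, Dlin L R (f p.1) (f p.2.1) (f p.2.2) u v w = 0)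
    (u1 v1 u2 v2 w : V) :
    Psi L R (f 0) (f 0)
      (∑ r ∈ tri s, Dlin L R (f r.1) (f r.2.1) (f r.2.2)) u1 v1 u2 v2 w = 0 := by
  classical
  -- notation
  let Q : Finset ℕ := Finset.range s
  let St : K → (V →ₗ[K] g) := fun t => ∑ i ∈ Q, t ^ i • f i
  let G : (ℕ × ℕ) × ℕ × ℕ × ℕ → g := fun z =>
    Psi L R (f z.1.1) (f z.1.2) (Dlin L R (f z.2.1) (f z.2.2.1) (f z.2.2.2)) u1 v1 u2 v2 w
  let dg : (ℕ × ℕ) × ℕ × ℕ × ℕ → ℕ := fun z => z.1.1 + z.1.2 + (z.2.1 + z.2.2.1 + z.2.2.2)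
  let W : Finset ((ℕ × ℕ) × ℕ × ℕ × ℕ) := (Q ×ˢ Q) ×ˢ (Q ×ˢ Q ×ˢ Q)
  -- Step 1 : expansion of the cubic defect
  have c1 : ∀ t : K, Dlin L R (St t) (St t) (St t)
      = ∑ r ∈ Q ×ˢ Q ×ˢ Q,
          t ^ (r.1 + r.2.1 + r.2.2) • Dlin L R (f r.1) (f r.2.1) (f r.2.2) := by
    intro t
    ext u v w
    have rhs : (∑ r ∈ Q ×ˢ Q ×ˢ Q,
          t ^ (r.1 + r.2.1 + r.2.2) • Dlin L R (f r.1) (f r.2.1) (f r.2.2)) u v w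
        = ∑ i ∈ Q, ∑ j ∈ Q, ∑ k ∈ Q,
            t ^ (i + j + k) • Dlin L R (f i) (f j) (f k) u v w := by
      simp only [LinearMap.sum_apply, LinearMap.smul_apply, Finset.sum_product]
    have lhs : Dlin L R (St t) (St t) (St t) u v w
        = ∑ i ∈ Q, ∑ j ∈ Q, ∑ k ∈ Q,
            t ^ (i + j + k) • Dlin L R (f i) (f j) (f k) u v w := by
      rw [show St t = ∑ i ∈ Q, t ^ i • f i from rfl, Dlin_sum1]
      refine Finset.sum_congr rfl fun i _ => ?_
      rw [Dlin_sum2, Finset.smul_sum]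
      refine Finset.sum_congr rfl fun j _ => ?_
      rw [Dlin_sum3, Finset.smul_sum, Finset.smul_sum]
      refine Finset.sum_congr rfl fun k _ => ?_
      rw [smul_smul, smul_smul, ← pow_add, ← pow_add]
    rw [lhs, rhs]
  -- Step 2 : full quintic expansion
  have expand : ∀ t : K, Psi L R (St t) (St t) (Dlin L R (St t) (St t) (St t)) u1 v1 u2 v2 w
      = ∑ z ∈ W, t ^ dg z • G z := by
    intro t
    rw [c1 t, Psi_sumθ]
    have rhs : ∑ z ∈ W, t ^ dg z • G z
        = ∑ r ∈ Q ×ˢ Q ×ˢ Q, ∑ i ∈ Q, ∑ j ∈ Q,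
            t ^ (r.1 + r.2.1 + r.2.2) • (t ^ i • (t ^ j •
              Psi L R (f i) (f j) (Dlin L R (f r.1) (f r.2.1) (f r.2.2))
                u1 v1 u2 v2 w)) := by
      rw [show W = (Q ×ˢ Q) ×ˢ (Q ×ˢ Q ×ˢ Q) from rfl, Finset.sum_product,
        Finset.sum_comm]
      refine Finset.sum_congr rfl fun r _ => ?_
      rw [Finset.sum_product]
      refine Finset.sum_congr rfl fun i _ => Finset.sum_congr rfl fun j _ => ?_
      show t ^ (i + j + (r.1 + r.2.1 + r.2.2)) • G ((i, j), r) = _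
      rw [smul_smul, smul_smul, ← pow_add, ← pow_add]
      congr 1
      ring
    rw [rhs]
    refine Finset.sum_congr rfl fun r _ => ?_
    rw [show St t = ∑ i ∈ Q, t ^ i • f i from rfl, Psi_suma, Finset.smul_sum]
    refine Finset.sum_congr rfl fun i _ => ?_
    rw [Psi_sumb, Finset.smul_sum, Finset.smul_sum]
  -- Step 3 : extract the degree-s coefficient
  have hAll : ∀ t : K,
      ∑ d ∈ Finset.range (5 * s),
        t ^ d • (∑ z ∈ W.filter (fun z => dg z = d), G z) = 0 := by
    intro t
    have h1 : ∀ d, t ^ d • (∑ z ∈ W.filter (fun z => dg z = d), G z)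
        = ∑ z ∈ W.filter (fun z => dg z = d), t ^ dg z • G z := by
      intro d
      rw [Finset.smul_sum]
      exact Finset.sum_congr rfl fun z hz => by
        rw [(Finset.mem_filter.mp hz).2]
    calc ∑ d ∈ Finset.range (5 * s),
            t ^ d • (∑ z ∈ W.filter (fun z => dg z = d), G z)
        = ∑ d ∈ Finset.range (5 * s), ∑ z ∈ W.filter (fun z => dg z = d),
            t ^ dg z • G z := Finset.sum_congr rfl fun d _ => h1 d
      _ = ∑ z ∈ W, t ^ dg z • G z := by
          refine Finset.sum_fiberwise_of_maps_to (fun z hz => ?_) _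
          obtain ⟨⟨⟨i, j⟩, k, l, m⟩, rfl⟩ : ∃ y, y = z := ⟨z, rfl⟩
          simp only [W, Q, Finset.mem_product, Finset.mem_range] at hz
          simp only [dg, Finset.mem_range]
          omega
      _ = 0 := by rw [← expand t]; exact lemA L R (St t) u1 v1 u2 v2 w
  have key := poly_vanish (fun d => ∑ z ∈ W.filter (fun z => dg z = d), G z) hAll s
    (by omega)
  -- Step 4 : identify the degree-s coefficient
  have hadd := fun x y => Psi_addθ L R (f 0) (f 0) x y u1 v1 u2 v2 w
  have h0 := Psi_zeroθ L R (f 0) (f 0) u1 v1 u2 v2 w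
  have hid : ∑ z ∈ W.filter (fun z => dg z = s), G z
      = Psi L R (f 0) (f 0)
          (∑ r ∈ tri s, Dlin L R (f r.1) (f r.2.1) (f r.2.2)) u1 v1 u2 v2 w := by
    have h00 : (∑ r ∈ Q ×ˢ Q ×ˢ Q, if dg ((0, 0), r) = s then G ((0, 0), r) else 0)
        = Psi L R (f 0) (f 0)
            (∑ r ∈ tri s, Dlin L R (f r.1) (f r.2.1) (f r.2.2)) u1 v1 u2 v2 w := by
      rw [← Finset.sum_filter]
      have hset : (Q ×ˢ Q ×ˢ Q).filter (fun r => dg ((0, 0), r) = s) = tri s := by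
        ext ⟨a, b, c⟩
        simp only [Finset.mem_filter, mem_tri, Q, Finset.mem_product,
          Finset.mem_range, dg]
        omega
      rw [hset]
      show (∑ a ∈ tri s,
          Psi L R (f 0) (f 0) (Dlin L R (f a.1) (f a.2.1) (f a.2.2)) u1 v1 u2 v2 w)
        = _
      rw [← Psi_sumθ0 L R (tri s) (fun a => Dlin L R (f a.1) (f a.2.1) (f a.2.2))]
    have hzero : ∀ p ∈ Q ×ˢ Q, p ≠ ((0, 0) : ℕ × ℕ) →
        (∑ r ∈ Q ×ˢ Q ×ˢ Q, if dg (p, r) = s then G (p, r) else 0) = 0 := by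
      rintro ⟨i, j⟩ hp hne
      have hij0 : ¬(i = 0 ∧ j = 0) := by simpa [Prod.ext_iff] using hne
      by_cases hij : i + j ≤ s
      · have hm : s - (i + j) < s := by omega
        have haddij := fun x y => Psi_addθ L R (f i) (f j) x y u1 v1 u2 v2 w
        have h0ij := Psi_zeroθ L R (f i) (f j) u1 v1 u2 v2 w
        rw [← Finset.sum_filter]
        have hset : (Q ×ˢ Q ×ˢ Q).filter (fun r => dg ((i, j), r) = s)
            = triples (s - (i + j)) := by
          ext ⟨a, b, c⟩
          simp only [Finset.mem_filter, mem_triples, Q, Finset.mem_product,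
            Finset.mem_range, dg]
          omega
        have hz : (∑ r ∈ triples (s - (i + j)),
            Dlin L R (f r.1) (f r.2.1) (f r.2.2)) = 0 := by
          ext u v w
          simp only [LinearMap.sum_apply, LinearMap.zero_apply]
          exact hlow _ hm u v w
        rw [hset]
        show (∑ a ∈ triples (s - (i + j)),
            Psi L R (f i) (f j) (Dlin L R (f a.1) (f a.2.1) (f a.2.2)) u1 v1 u2 v2 w)
          = 0
        rw [← Psi_sumθ0 L R (triples (s - (i + j)))
          (fun a => Dlin L R (f a.1) (f a.2.1) (f a.2.2)), hz]
        exact Psi_zeroθ L R (f i) (f j) u1 v1 u2 v2 w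
      · refine Finset.sum_eq_zero fun r hr => if_neg ?_
        simp only [dg]
        omega
    calc ∑ z ∈ W.filter (fun z => dg z = s), G z
        = ∑ z ∈ W, if dg z = s then G z else 0 := Finset.sum_filter _ _
      _ = ∑ z ∈ (Q ×ˢ Q) ×ˢ (Q ×ˢ Q ×ˢ Q), (if dg z = s then G z else 0) := rfl
      _ = ∑ p ∈ Q ×ˢ Q, ∑ r ∈ Q ×ˢ Q ×ˢ Q,
            (if dg (p, r) = s then G (p, r) else 0) := Finset.sum_product _ _ _
      _ = ∑ r ∈ Q ×ˢ Q ×ˢ Q, (if dg ((0, 0), r) = s then G ((0, 0), r) else 0) :=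
          Finset.sum_eq_single_of_mem ((0, 0) : ℕ × ℕ)
            (by simp only [Q, Finset.mem_product, Finset.mem_range]; omega) hzero
      _ = Psi L R (f 0) (f 0)
            (∑ r ∈ tri s, Dlin L R (f r.1) (f r.2.1) (f r.2.2)) u1 v1 u2 v2 w := h00
  rw [← hid]
  exact key

end Obstruction
section Construction

variable {K : Type*} [Field K] {g : Type*} [AddCommGroup g] [Module K g]
  {V : Type*} [AddCommGroup V] [Module K V]
variable (L : ThreeLie K g) (R : ThreeLieRep K g V L)

/-- the order-`s` deformation equation for a candidate `η` in degree `s`. -/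
def Cond (f : ℕ → V →ₗ[K] g) (s : ℕ) (η : V →ₗ[K] g) : Prop :=
  ∀ u v w : V,
    (∑ r ∈ tri s, Dlin L R (f r.1) (f r.2.1) (f r.2.2) u v w)
      + Dlin L R η (f 0) (f 0) u v w + Dlin L R (f 0) η (f 0) u v w
      + Dlin L R (f 0) (f 0) η u v w = 0

open Classical in
noncomputable def nextVal (f : ℕ → V →ₗ[K] g) (s : ℕ) : V →ₗ[K] g :=
  if h : ∃ η : V →ₗ[K] g, Cond L R f s η then h.choose else 0

noncomputable def tauStage (T τ1 : V →ₗ[K] g) : ℕ → ℕ → (V →ₗ[K] g)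
  | 0 => fun m => if m = 1 then τ1 else T
  | (n+1) => fun m =>
      if m = n + 1 then
        (if n + 1 = 1 then τ1 else nextVal L R (tauStage T τ1 n) (n+1))
      else tauStage T τ1 n m

noncomputable def tau (T τ1 : V →ₗ[K] g) (n : ℕ) : V →ₗ[K] g := tauStage L R T τ1 n n

lemma tau_zero (T τ1 : V →ₗ[K] g) : tau L R T τ1 0 = T := rfl

lemma tau_one (T τ1 : V →ₗ[K] g) : tau L R T τ1 1 = τ1 := by
  simp [tau, tauStage]

lemma tauStage_eq (T τ1 : V →ₗ[K] g) :
    ∀ n m, m ≤ n → tauStage L R T τ1 n m = tau L R T τ1 m := by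
  intro n
  induction n with
  | zero =>
    intro m hm
    obtain rfl : m = 0 := Nat.le_zero.mp hm
    rfl
  | succ n ih =>
    intro m hm
    rcases Nat.lt_or_ge m (n + 1) with h | h
    · show (if m = n + 1 then _ else tauStage L R T τ1 n m) = _
      rw [if_neg (by omega), ih m (by omega)]
    · obtain rfl : m = n + 1 := by omega
      rfl

lemma tau_succ (T τ1 : V →ₗ[K] g) (n : ℕ) (hn : 1 ≤ n) :
    tau L R T τ1 (n + 1) = nextVal L R (tauStage L R T τ1 n) (n + 1) := by
  show (if n + 1 = n + 1 then _ else _) = _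
  rw [if_pos rfl, if_neg (by omega)]

lemma Cond_congr (f f' : ℕ → V →ₗ[K] g) (s : ℕ) (hs : 1 ≤ s)
    (h : ∀ m, m < s → f m = f' m) (η : V →ₗ[K] g) :
    Cond L R f s η ↔ Cond L R f' s η := by
  unfold Cond
  have h0 : f 0 = f' 0 := h 0 (by omega)
  have hsum : ∀ u v w : V,
      (∑ r ∈ tri s, Dlin L R (f r.1) (f r.2.1) (f r.2.2) u v w)
        = ∑ r ∈ tri s, Dlin L R (f' r.1) (f' r.2.1) (f' r.2.2) u v w := by
    intro u v w
    refine Finset.sum_congr rfl fun r hr => ?_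
    have hm := mem_tri.mp hr
    rw [h _ hm.1, h _ hm.2.1, h _ hm.2.2.1]
  refine forall_congr' fun u => forall_congr' fun v => forall_congr' fun w => ?_
  rw [h0, hsum u v w]

lemma cocycle_form (T : V →ₗ[K] g) (Θ : V →ₗ[K] V →ₗ[K] V →ₗ[K] g) (u1 v1 u2 v2 w : V) :
    - (-Θ) (brT L R T u1 v1 u2) v2 w - (-Θ) u2 (brT L R T u1 v1 v2) w
      - (-Θ) u2 v2 (brT L R T u1 v1 w) + (-Θ) u1 v1 (brT L R T u2 v2 w)
      + lT L R T u1 v1 ((-Θ) u2 v2 w) - lT L R T u2 v2 ((-Θ) u1 v1 w)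
      - mT L R T u2 w ((-Θ) u1 v1 v2) - rT L R T v2 w ((-Θ) u1 v1 u2)
      = - Psi L R T T Θ u1 v1 u2 v2 w := by
  simp only [brT, lT, mT, rT, Psi, LinearMap.neg_apply, map_neg]
  abel

end Construction
/-- if the third cohomology group of the embedding tensor `T`
vanishes (every 2-cocycle `θ` is a coboundary `∂_T η`), then every 2-cocycle
`τ_1` is the infinitesimal of some formal deformation of `T`. -/
theorem every_two_cocycle_is_infinitesimal [CharZero K]
    (L : ThreeLie K g) (R : ThreeLieRep K g V L) (T : V →ₗ[K] g)
    (hT : IsEmbeddingTensor L R T)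
    (hH3 : ∀ θ : V →ₗ[K] V →ₗ[K] V →ₗ[K] g,
      (∀ u1 v1 u2 v2 w : V,
        - θ (brT L R T u1 v1 u2) v2 w - θ u2 (brT L R T u1 v1 v2) w
          - θ u2 v2 (brT L R T u1 v1 w) + θ u1 v1 (brT L R T u2 v2 w)
          + lT L R T u1 v1 (θ u2 v2 w) - lT L R T u2 v2 (θ u1 v1 w)
          - mT L R T u2 w (θ u1 v1 v2) - rT L R T v2 w (θ u1 v1 u2) = 0) →
      ∃ η : V →ₗ[K] g, ∀ u v w : V,
        θ u v w =
          L.br (T u) (T v) (η w) + L.br (η u) (T v) (T w) + L.br (T u) (η v) (T w)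
            - η (R.ρ (T u) (T v) w) - T (R.ρ (η u) (T v) w) - T (R.ρ (T u) (η v) w)) :
    ∀ τ1 : V →ₗ[K] g,
      (∀ u v w : V,
        L.br (T u) (T v) (τ1 w) + L.br (τ1 u) (T v) (T w) + L.br (T u) (τ1 v) (T w)
          = τ1 (R.ρ (T u) (T v) w) + T (R.ρ (τ1 u) (T v) w) + T (R.ρ (T u) (τ1 v) w)) →
      ∃ τ : ℕ → (V →ₗ[K] g), τ 0 = T ∧ τ 1 = τ1 ∧
        ∀ (s : ℕ) (u v w : V),
          ∑ p ∈ triples s,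
            (L.br ((τ p.1) u) ((τ p.2.1) v) ((τ p.2.2) w)
              - (τ p.2.2) (R.ρ ((τ p.1) u) ((τ p.2.1) v) w)) = 0 := by
  intro τ1 hτ1
  classical
  set τ : ℕ → (V →ₗ[K] g) := tau L R T τ1 with hτ
  have main : ∀ s, ∀ u v w : V,
      ∑ p ∈ triples s, Dlin L R (τ p.1) (τ p.2.1) (τ p.2.2) u v w = 0 := by
    intro s
    induction s using Nat.strong_induction_on with
    | _ s ih =>
      match s, ih with
      | 0, ih =>
        intro u v w
        have h0 : triples 0 = {((0 : ℕ), (0 : ℕ), (0 : ℕ))} := by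
          ext ⟨i, j, k⟩
          simp only [mem_triples, Finset.mem_singleton, Prod.mk.injEq]
          omega
        rw [h0, Finset.sum_singleton]
        simp only [Dlin_apply]
        have hz : τ 0 = T := tau_zero L R T τ1
        rw [hz, hT u v w, sub_self]
      | 1, ih =>
        intro u v w
        have h1 : triples 1 = {((1 : ℕ), (0 : ℕ), (0 : ℕ)), ((0 : ℕ), (1 : ℕ), (0 : ℕ)),
            ((0 : ℕ), (0 : ℕ), (1 : ℕ))} := by
          ext ⟨i, j, k⟩
          simp only [mem_triples, Finset.mem_insert, Finset.mem_singleton, Prod.mk.injEq]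
          omega
        rw [h1]
        rw [Finset.sum_insert (by simp), Finset.sum_insert (by simp),
          Finset.sum_singleton]
        simp only [Dlin_apply]
        have hz : τ 0 = T := tau_zero L R T τ1
        have ho : τ 1 = τ1 := tau_one L R T τ1
        rw [hz, ho]
        linear_combination (norm := module) hτ1 u v w
      | (n+2), ih =>
        have hobs := obstruction L R τ (n + 2) (by omega) (fun m hm => ih m hm)
        have hco : ∀ u1 v1 u2 v2 w : V,
            - (-(∑ r ∈ tri (n+2), Dlin L R (τ r.1) (τ r.2.1) (τ r.2.2)))
                (brT L R T u1 v1 u2) v2 w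
              - (-(∑ r ∈ tri (n+2), Dlin L R (τ r.1) (τ r.2.1) (τ r.2.2))) u2
                (brT L R T u1 v1 v2) w
              - (-(∑ r ∈ tri (n+2), Dlin L R (τ r.1) (τ r.2.1) (τ r.2.2))) u2 v2
                (brT L R T u1 v1 w)
              + (-(∑ r ∈ tri (n+2), Dlin L R (τ r.1) (τ r.2.1) (τ r.2.2))) u1 v1
                (brT L R T u2 v2 w)
              + lT L R T u1 v1
                ((-(∑ r ∈ tri (n+2), Dlin L R (τ r.1) (τ r.2.1) (τ r.2.2))) u2 v2 w)
              - lT L R T u2 v2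
                ((-(∑ r ∈ tri (n+2), Dlin L R (τ r.1) (τ r.2.1) (τ r.2.2))) u1 v1 w)
              - mT L R T u2 w
                ((-(∑ r ∈ tri (n+2), Dlin L R (τ r.1) (τ r.2.1) (τ r.2.2))) u1 v1 v2)
              - rT L R T v2 w
                ((-(∑ r ∈ tri (n+2), Dlin L R (τ r.1) (τ r.2.1) (τ r.2.2))) u1 v1 u2)
              = 0 := by
          intro u1 v1 u2 v2 w
          rw [cocycle_form, neg_eq_zero]
          exact hobs u1 v1 u2 v2 w
        obtain ⟨η, hη⟩ := hH3
          (-(∑ r ∈ tri (n+2), Dlin L R (τ r.1) (τ r.2.1) (τ r.2.2))) hco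
        have hex : ∃ η' : V →ₗ[K] g, Cond L R τ (n + 2) η' := by
          refine ⟨η, fun u v w => ?_⟩
          have h2 := hη u v w
          simp only [LinearMap.neg_apply, LinearMap.sum_apply] at h2
          have h3 : L.br (T u) (T v) (η w) + L.br (η u) (T v) (T w)
                + L.br (T u) (η v) (T w) - η (R.ρ (T u) (T v) w)
                - T (R.ρ (η u) (T v) w) - T (R.ρ (T u) (η v) w)
              = Dlin L R η T T u v w + Dlin L R T η T u v w
                + Dlin L R T T η u v w := by
            simp only [Dlin_apply]; abel
          rw [h3] at h2
          have hz : τ 0 = T := tau_zero L R T τ1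
          rw [hz]
          linear_combination (norm := module) -h2
        have hiff := fun η' => Cond_congr L R (tauStage L R T τ1 (n + 1)) τ (n + 2)
          (by omega) (fun m hm => tauStage_eq L R T τ1 (n + 1) m (by omega)) η'
        have hex' : ∃ η', Cond L R (tauStage L R T τ1 (n + 1)) (n + 2) η' := by
          obtain ⟨η', hη'⟩ := hex
          exact ⟨η', (hiff η').mpr hη'⟩
        have hc : Cond L R (tauStage L R T τ1 (n + 1)) (n + 2) (τ (n + 2)) := by
          have hts : τ (n + 2) = nextVal L R (tauStage L R T τ1 (n + 1)) (n + 2) :=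
            tau_succ L R T τ1 (n + 1) (by omega)
          rw [hts]
          unfold nextVal
          rw [dif_pos hex']
          exact hex'.choose_spec
        have hc' : Cond L R τ (n + 2) (τ (n + 2)) := (hiff _).mp hc
        intro u v w
        have heq := hc' u v w
        rw [sum_triples_split (by omega)
          (fun p => Dlin L R (τ p.1) (τ p.2.1) (τ p.2.2) u v w)]
        have hz : τ 0 = T := tau_zero L R T τ1
        rw [hz] at heq ⊢
        linear_combination (norm := module) heq
  refine ⟨τ, tau_zero L R T τ1, tau_one L R T τ1, fun s u v w => ?_⟩
  have := main s u v w
  simpa only [Dlin_apply] using this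
end
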